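/- arXiv:2406.04245 — 8 statements merged into one kernel-verified Lean document; each statement's English description precedes it below -/
import Mathlib

section
/- Let P and Q be n×n complex positive semidefinite matrices such that the range of P is contained in the range of Q. Then (1/4)·‖P − Q‖₁² ≤ max{Re Tr P, Re Tr Q} · ( D(P‖Q) − Re Tr(P − Q) ). -/
open Matrix
open scoped ComplexOrder

/-- The matrix logarithm, applying `Real.log` (with `Real.log 0 = 0`) to the eigenvalues of a
Hermitian matrix via the continuous functional calculus (junk value on non-Hermitian input). -/
noncomputable def matLog {n : ℕ} (M : Matrix (Fin n) (Fin n) ℂ) : Matrix (Fin n) (Fin n) ℂ :=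
  cfc Real.log M

/-- The quantum relative entropy `D(P‖Q) = Re Tr(P·log P) − Re Tr(P·log Q)`. -/
noncomputable def relEnt {n : ℕ} (P Q : Matrix (Fin n) (Fin n) ℂ) : ℝ :=
  ((P * matLog P).trace).re - ((P * matLog Q).trace).re

/-- The square root `Matrix.PosSemidef.sqrt` of the older Mathlib, spelled out with its old definition. -/
noncomputable def psdSqrt {n : ℕ} {A : Matrix (Fin n) (Fin n) ℂ} (hA : A.PosSemidef) :
    Matrix (Fin n) (Fin n) ℂ :=
  hA.1.eigenvectorUnitary.1 * diagonal ((↑) ∘ (Real.sqrt ∘ hA.1.eigenvalues)) *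
    (star hA.1.eigenvectorUnitary : Matrix (Fin n) (Fin n) ℂ)

/-- The trace norm of a matrix: `‖A‖₁ = Tr √(AᴴA)`, the sum of the singular values. -/
noncomputable def traceNorm {n : ℕ} (A : Matrix (Fin n) (Fin n) ℂ) : ℝ :=
  ((psdSqrt (Matrix.posSemidef_conjTranspose_mul_self A)).trace).re

/-!
Put `A = √P - √Q` and `B = √P + √Q`, so that `AB + BA = 2(P - Q)`. With the Hermitian contraction
`S = sgn(P - Q)` one has `2 ‖P - Q‖₁ = Re Tr(S A B) + Re Tr(S B A)`, and Cauchy–Schwarz for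
`⟪X, Y⟫ = Tr(Xᴴ Y)` bounds each term by `‖A‖₂ ‖B‖₂`. The parallelogram law
`‖A‖₂² + ‖B‖₂² = 2 (Tr P + Tr Q)` bounds `‖B‖₂²` by `4 max{Tr P, Tr Q}`.

It remains to show `‖A‖₂² ≤ D(P‖Q) - Tr(P - Q)`. In eigenbases `(uᵢ)` of `P` and `(vⱼ)` of `Q`,
with eigenvalues `aᵢ`, `bⱼ`, both sides are sums weighted by the doubly stochastic matrix
`|⟪uᵢ, vⱼ⟫|²`, and termwise the inequality is `(√a - √b)² ≤ a log a - a log b - a + b`. This fails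
only for `b = 0 < a`, and the range condition makes the weights of those terms vanish.
-/

open scoped MatrixOrder

namespace Real

lemma sq_sqrt_sub_sqrt_le {x y : ℝ} (hx : 0 ≤ x) (hy : 0 ≤ y) (hxy : y = 0 → x = 0) :
    (√x - √y) ^ 2 ≤ x * log x - x * log y - x + y := by
  rcases hx.eq_or_lt with rfl | hx
  · simp [Real.sq_sqrt hy]
  have hy : 0 < y := hy.lt_of_ne fun h ↦ hx.ne' (hxy h.symm)
  have hsx : 0 < √x := sqrt_pos.mpr hx
  have hsy : 0 < √y := sqrt_pos.mpr hy
  have hlog : log y - log x ≤ 2 * (√y / √x - 1) := by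
    have := log_le_sub_one_of_pos (div_pos hsy hsx)
    rw [log_div hsy.ne' hsx.ne', log_sqrt hy.le, log_sqrt hx.le] at this
    linarith
  have hmul : x * (√y / √x) = √x * √y := by
    field_simp
    rw [sq_sqrt hx.le]
  nlinarith [mul_le_mul_of_nonneg_left hlog hx.le, sq_sqrt hx.le, sq_sqrt hy.le]

end Real

section DoublyStochastic

variable {ι : Type*} [Fintype ι] [DecidableEq ι] {c : Matrix ι ι ℝ}

lemma sum_sum_mul_left_of_mem_doublyStochastic (hc : c ∈ doublyStochastic ℝ ι) (u : ι → ℝ) :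
    ∑ i, ∑ j, c i j * u i = ∑ i, u i := by
  simp only [← Finset.sum_mul, sum_row_of_mem_doublyStochastic hc, one_mul]

lemma sum_sum_mul_right_of_mem_doublyStochastic (hc : c ∈ doublyStochastic ℝ ι) (v : ι → ℝ) :
    ∑ i, ∑ j, c i j * v j = ∑ j, v j := by
  rw [Finset.sum_comm]
  simp only [← Finset.sum_mul, sum_col_of_mem_doublyStochastic hc, one_mul]

lemma sum_add_sum_sub_two_mul_sum_sqrt_le_of_mem_doublyStochastic
    (hc : c ∈ doublyStochastic ℝ ι) {a b : ι → ℝ} (ha : ∀ i, 0 ≤ a i) (hb : ∀ j, 0 ≤ b j)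
    (hab : ∀ i j, b j = 0 → a i * c i j = 0) :
    ∑ i, a i + ∑ j, b j - 2 * ∑ i, ∑ j, c i j * (√(a i) * √(b j))
      ≤ ∑ i, a i * Real.log (a i) - ∑ i, ∑ j, c i j * (a i * Real.log (b j))
        - (∑ i, a i - ∑ j, b j) := by
  have hterm : ∀ i j, c i j * (√(a i) - √(b j)) ^ 2
      ≤ c i j * (a i * Real.log (a i) - a i * Real.log (b j) - a i + b j) := by
    intro i j
    rcases (nonneg_of_mem_doublyStochastic hc (i := i) (j := j)).eq_or_lt with hcij | hcij
    · simp [← hcij]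
    refine mul_le_mul_of_nonneg_left (Real.sq_sqrt_sub_sqrt_le (ha i) (hb j) fun h ↦ ?_) hcij.le
    exact (mul_eq_zero.mp (hab i j h)).resolve_right hcij.ne'
  have hsum := Finset.sum_le_sum fun i (_ : i ∈ Finset.univ) ↦
    Finset.sum_le_sum fun j (_ : j ∈ Finset.univ) ↦ hterm i j
  have hsq : ∀ i j, (√(a i) - √(b j)) ^ 2 = a i + b j - 2 * (√(a i) * √(b j)) := fun i j ↦ by
    rw [sub_sq, Real.sq_sqrt (ha i), Real.sq_sqrt (hb j)]
    ring
  simp only [hsq, mul_sub, mul_add, Finset.sum_sub_distrib, Finset.sum_add_distrib,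
    sum_sum_mul_left_of_mem_doublyStochastic hc, sum_sum_mul_right_of_mem_doublyStochastic hc,
    mul_left_comm (c _ _) 2, ← Finset.mul_sum] at hsum
  linarith

end DoublyStochastic

namespace Matrix

variable {ι : Type*} [Fintype ι] [DecidableEq ι] {A B S : Matrix ι ι ℂ}

lemma sum_normSq_row_of_mem_unitary {U : Matrix ι ι ℂ} (hU : U ∈ unitary (Matrix ι ι ℂ))
    (i : ι) : ∑ j, Complex.normSq (U i j) = 1 := by
  have h : (U * star U) i i = (1 : Matrix ι ι ℂ) i i := by rw [Unitary.mul_star_self_of_mem hU]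
  rw [mul_apply, one_apply_eq] at h
  exact_mod_cast (by simpa [star_apply, Complex.mul_conj] using h :
    ∑ j, (Complex.normSq (U i j) : ℂ) = 1)

lemma normSq_mem_doublyStochastic_of_mem_unitary {U : Matrix ι ι ℂ}
    (hU : U ∈ unitary (Matrix ι ι ℂ)) :
    of (fun i j ↦ Complex.normSq (U i j)) ∈ doublyStochastic ℝ ι := by
  refine mem_doublyStochastic_iff_sum.mpr ⟨fun i j ↦ Complex.normSq_nonneg _,
    sum_normSq_row_of_mem_unitary hU, fun j ↦ ?_⟩
  simpa [star_apply] using sum_normSq_row_of_mem_unitary (Unitary.star_mem hU) j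

lemma norm_trace_conjTranspose_mul_le (X Y : Matrix ι ι ℂ) :
    ‖(Xᴴ * Y).trace‖ ≤ √(Xᴴ * X).trace.re * √(Yᴴ * Y).trace.re := by
  -- Cauchy–Schwarz for the Hilbert–Schmidt inner product `⟪X, Y⟫ = Tr(Y * 1 * Xᴴ)`
  let _ := toMatrixSeminormedAddCommGroup (1 : Matrix ι ι ℂ) PosSemidef.one
  let _ := toMatrixInnerProductSpace (1 : Matrix ι ι ℂ) PosSemidef.one
  have h := norm_inner_le_norm (𝕜 := ℂ) X Y
  rw [norm_eq_sqrt_re_inner (𝕜 := ℂ) X, norm_eq_sqrt_re_inner (𝕜 := ℂ) Y] at h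
  change ‖(Y * 1 * Xᴴ).trace‖ ≤ √(X * 1 * Xᴴ).trace.re * √(Y * 1 * Yᴴ).trace.re at h
  simpa only [Matrix.mul_one, trace_mul_comm Y, trace_mul_comm X, trace_mul_comm Y Yᴴ] using h

omit [DecidableEq ι] in
lemma PosSemidef.re_trace_nonneg (hA : A.PosSemidef) : 0 ≤ A.trace.re :=
  (Complex.nonneg_iff.mp hA.trace_nonneg).1

omit [DecidableEq ι] in
lemma IsHermitian.re_trace_mul_self_nonneg (hA : A.IsHermitian) : 0 ≤ (A * A).trace.re := by
  simpa only [hA.eq] using (posSemidef_conjTranspose_mul_self A).re_trace_nonneg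

lemma re_trace_conjTranspose_mul_self_mul_le (hS : S.IsHermitian) (hS1 : (1 - S * S).PosSemidef)
    (X : Matrix ι ι ℂ) : ((X * S)ᴴ * (X * S)).trace.re ≤ (Xᴴ * X).trace.re := by
  have hXS : ((X * S)ᴴ * (X * S)).trace = (X * (S * S) * Xᴴ).trace := by
    rw [conjTranspose_mul, hS.eq, trace_mul_comm]
    simp only [Matrix.mul_assoc]
  have hgap := (hS1.mul_mul_conjTranspose_same X).re_trace_nonneg
  rw [Matrix.mul_sub, Matrix.sub_mul, Matrix.mul_one, trace_sub, Complex.sub_re] at hgap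
  rw [hXS, trace_mul_comm Xᴴ]
  linarith

lemma re_trace_mul_conjTranspose_mul_le (hS : S.IsHermitian) (hS1 : (1 - S * S).PosSemidef)
    (X Y : Matrix ι ι ℂ) :
    (S * (Xᴴ * Y)).trace.re ≤ √(Xᴴ * X).trace.re * √(Yᴴ * Y).trace.re := by
  have hXS : S * (Xᴴ * Y) = (X * S)ᴴ * Y := by
    rw [conjTranspose_mul, hS.eq, Matrix.mul_assoc]
  calc (S * (Xᴴ * Y)).trace.re
      ≤ ‖((X * S)ᴴ * Y).trace‖ := hXS ▸ Complex.re_le_norm _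
    _ ≤ √((X * S)ᴴ * (X * S)).trace.re * √(Yᴴ * Y).trace.re :=
      norm_trace_conjTranspose_mul_le _ _
    _ ≤ √(Xᴴ * X).trace.re * √(Yᴴ * Y).trace.re :=
      mul_le_mul_of_nonneg_right
        (Real.sqrt_le_sqrt (re_trace_conjTranspose_mul_self_mul_le hS hS1 X)) (Real.sqrt_nonneg _)

omit [DecidableEq ι] in
lemma PosSemidef.mulVec_eq_zero_of_range_le (hA : A.PosSemidef) (hB : B.IsHermitian)
    (hrange : LinearMap.range A.mulVecLin ≤ LinearMap.range B.mulVecLin) {v : ι → ℂ}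
    (hv : B *ᵥ v = 0) : A *ᵥ v = 0 := by
  obtain ⟨y, hy⟩ := hrange ⟨v, rfl⟩
  rw [← hA.dotProduct_mulVec_zero_iff, ← mulVecLin_apply, ← hy, mulVecLin_apply,
    dotProduct_mulVec, ← hB.eq, ← star_mulVec, hv, star_zero, zero_dotProduct]

namespace IsHermitian

lemma cfc_eq_mul_diagonal_mul (hA : A.IsHermitian) (f : ℝ → ℝ) :
    cfc f A = (hA.eigenvectorUnitary : Matrix ι ι ℂ) * diagonal (fun i ↦ (f (hA.eigenvalues i) : ℂ))
      * star (hA.eigenvectorUnitary : Matrix ι ι ℂ) := by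
  rw [hA.cfc_eq, IsHermitian.cfc, Unitary.conjStarAlgAut_apply]
  rfl

lemma trace_cfc (hA : A.IsHermitian) (f : ℝ → ℝ) :
    (cfc f A).trace = ∑ i, (f (hA.eigenvalues i) : ℂ) := by
  rw [hA.cfc_eq_mul_diagonal_mul, trace_mul_cycle, Unitary.coe_star_mul_self, Matrix.one_mul,
    trace_diagonal]

lemma star_eigenvectorUnitary_mul_self (hA : A.IsHermitian) :
    star (hA.eigenvectorUnitary : Matrix ι ι ℂ) * A =
      diagonal (fun i ↦ (hA.eigenvalues i : ℂ)) * star (hA.eigenvectorUnitary : Matrix ι ι ℂ) := by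
  have h := hA.conjStarAlgAut_star_eigenvectorUnitary
  rw [Unitary.conjStarAlgAut_star_apply] at h
  rw [← Matrix.mul_one (_ * A), ← Unitary.coe_mul_star_self hA.eigenvectorUnitary,
    ← Matrix.mul_assoc, h]
  rfl

/-- The transition probabilities `|⟪uᵢ, vⱼ⟫|²` between the eigenbases `(uᵢ)` of `A` and `(vⱼ)`
of `B`. -/
noncomputable def eigenOverlap (hA : A.IsHermitian) (hB : B.IsHermitian) : Matrix ι ι ℝ :=
  of fun i j ↦
    Complex.normSq ((star (hA.eigenvectorUnitary : Matrix ι ι ℂ) * hB.eigenvectorUnitary) i j)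

lemma eigenOverlap_mem_doublyStochastic (hA : A.IsHermitian) (hB : B.IsHermitian) :
    eigenOverlap hA hB ∈ doublyStochastic ℝ ι :=
  normSq_mem_doublyStochastic_of_mem_unitary
    (Submonoid.mul_mem _ (Unitary.star_mem hA.eigenvectorUnitary.2) hB.eigenvectorUnitary.2)

lemma trace_cfc_mul_cfc (hA : A.IsHermitian) (hB : B.IsHermitian) (f g : ℝ → ℝ) :
    (cfc f A * cfc g B).trace = ∑ i, ∑ j,
      ((eigenOverlap hA hB i j * (f (hA.eigenvalues i) * g (hB.eigenvalues j)) : ℝ) : ℂ) := by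
  set W := star (hA.eigenvectorUnitary : Matrix ι ι ℂ) * hB.eigenvectorUnitary
  have hW : star W = star (hB.eigenvectorUnitary : Matrix ι ι ℂ) * hA.eigenvectorUnitary := by
    simp [W, StarMul.star_mul]
  have hconj : (cfc f A * cfc g B).trace = (diagonal (fun i ↦ (f (hA.eigenvalues i) : ℂ)) * W *
      diagonal (fun j ↦ (g (hB.eigenvalues j) : ℂ)) * star W).trace := by
    rw [hA.cfc_eq_mul_diagonal_mul, hB.cfc_eq_mul_diagonal_mul, hW]
    simp only [W, Matrix.mul_assoc]
    rw [trace_mul_comm]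
    simp only [Matrix.mul_assoc]
  rw [hconj, trace]
  refine Finset.sum_congr rfl fun i _ ↦ ?_
  rw [diag_apply, mul_apply]
  refine Finset.sum_congr rfl fun j _ ↦ ?_
  simp only [mul_diagonal, diagonal_mul, star_apply, eigenOverlap, of_apply, W, Complex.star_def]
  push_cast
  rw [← Complex.mul_conj]
  ring

lemma eigenvalues_mul_eigenOverlap_eq_zero (hA : A.IsHermitian) (hB : B.IsHermitian) {j : ι}
    (hj : A *ᵥ ⇑(hB.eigenvectorBasis j) = 0) (i : ι) :
    hA.eigenvalues i * eigenOverlap hA hB i j = 0 := by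
  have h := congr_fun (congrArg (star (hA.eigenvectorUnitary : Matrix ι ι ℂ) *ᵥ ·) hj) i
  rw [mulVec_mulVec, star_eigenvectorUnitary_mul_self, ← mulVec_mulVec, mulVec_zero,
    mulVec_diagonal] at h
  change (hA.eigenvalues i : ℂ) *
    (star (hA.eigenvectorUnitary : Matrix ι ι ℂ) * hB.eigenvectorUnitary) i j = 0 at h
  rcases mul_eq_zero.mp h with h | h
  · simp [Complex.ofReal_eq_zero.mp h]
  · simp [eigenOverlap, h]

lemma re_trace_eq_sum_eigenvalues (hA : A.IsHermitian) : A.trace.re = ∑ i, hA.eigenvalues i := by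
  simp [hA.trace_eq_sum_eigenvalues, Complex.re_sum]

end IsHermitian

namespace PosSemidef

variable {P Q : Matrix ι ι ℂ}

lemma re_trace_sqrt_mul_sqrt (hP : P.PosSemidef) (hQ : Q.PosSemidef) :
    (CFC.sqrt P * CFC.sqrt Q).trace.re = ∑ i, ∑ j, hP.1.eigenOverlap hQ.1 i j *
      (√(hP.1.eigenvalues i) * √(hQ.1.eigenvalues j)) := by
  rw [CFC.sqrt_eq_real_sqrt P hP.nonneg, CFC.sqrt_eq_real_sqrt Q hQ.nonneg, cfcₙ_eq_cfc,
    cfcₙ_eq_cfc, hP.1.trace_cfc_mul_cfc hQ.1]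
  simp [Complex.re_sum]

lemma re_trace_sqrt_sub_sqrt_mul_self (hP : P.PosSemidef) (hQ : Q.PosSemidef) :
    ((CFC.sqrt P - CFC.sqrt Q) * (CFC.sqrt P - CFC.sqrt Q)).trace.re =
      P.trace.re + Q.trace.re - 2 * (CFC.sqrt P * CFC.sqrt Q).trace.re := by
  have hexp : (CFC.sqrt P - CFC.sqrt Q) * (CFC.sqrt P - CFC.sqrt Q) =
      CFC.sqrt P * CFC.sqrt P + CFC.sqrt Q * CFC.sqrt Q
        - (CFC.sqrt P * CFC.sqrt Q + CFC.sqrt Q * CFC.sqrt P) := by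
    noncomm_ring
  rw [hexp, CFC.sqrt_mul_sqrt_self P hP.nonneg, CFC.sqrt_mul_sqrt_self Q hQ.nonneg, trace_sub,
    trace_add, trace_add, trace_mul_comm (CFC.sqrt Q)]
  simp only [Complex.sub_re, Complex.add_re]
  ring

lemma sqrt_sub_sqrt_mul_sqrt_add_sqrt_add (hP : P.PosSemidef) (hQ : Q.PosSemidef) :
    (CFC.sqrt P - CFC.sqrt Q) * (CFC.sqrt P + CFC.sqrt Q)
      + (CFC.sqrt P + CFC.sqrt Q) * (CFC.sqrt P - CFC.sqrt Q) = (P - Q) + (P - Q) := by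
  have hexp : (CFC.sqrt P - CFC.sqrt Q) * (CFC.sqrt P + CFC.sqrt Q)
      + (CFC.sqrt P + CFC.sqrt Q) * (CFC.sqrt P - CFC.sqrt Q)
      = (CFC.sqrt P * CFC.sqrt P - CFC.sqrt Q * CFC.sqrt Q)
        + (CFC.sqrt P * CFC.sqrt P - CFC.sqrt Q * CFC.sqrt Q) := by
    noncomm_ring
  rw [hexp, CFC.sqrt_mul_sqrt_self P hP.nonneg, CFC.sqrt_mul_sqrt_self Q hQ.nonneg]

lemma re_trace_sqrt_sub_sqrt_mul_self_add (hP : P.PosSemidef) (hQ : Q.PosSemidef) :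
    ((CFC.sqrt P - CFC.sqrt Q) * (CFC.sqrt P - CFC.sqrt Q)).trace.re
      + ((CFC.sqrt P + CFC.sqrt Q) * (CFC.sqrt P + CFC.sqrt Q)).trace.re
      = 2 * (P.trace.re + Q.trace.re) := by
  have hexp : (CFC.sqrt P - CFC.sqrt Q) * (CFC.sqrt P - CFC.sqrt Q)
      + (CFC.sqrt P + CFC.sqrt Q) * (CFC.sqrt P + CFC.sqrt Q)
      = (CFC.sqrt P * CFC.sqrt P + CFC.sqrt Q * CFC.sqrt Q)
        + (CFC.sqrt P * CFC.sqrt P + CFC.sqrt Q * CFC.sqrt Q) := by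
    noncomm_ring
  rw [← Complex.add_re, ← trace_add, hexp, CFC.sqrt_mul_sqrt_self P hP.nonneg,
    CFC.sqrt_mul_sqrt_self Q hQ.nonneg, trace_add, trace_add, Complex.add_re, Complex.add_re]
  ring
end PosSemidef

lemma isHermitian_sqrt (A : Matrix ι ι ℂ) : (CFC.sqrt A).IsHermitian :=
  (nonneg_iff_posSemidef.mp (CFC.sqrt_nonneg A)).1

end Matrix

section TraceNorm

variable {n : ℕ} {X A B : Matrix (Fin n) (Fin n) ℂ}

lemma traceNorm_eq_re_trace_cfc_abs (hX : X.IsHermitian) :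
    traceNorm X = (cfc (fun x : ℝ ↦ |x|) X).trace.re := by
  have hsq : Xᴴ * X = cfc (fun x : ℝ ↦ x * x) X := by
    rw [cfc_mul _ _ X (X.finite_real_spectrum.continuousOn _)
      (X.finite_real_spectrum.continuousOn _), cfc_id' ℝ X, hX.eq]
  have hsqrt : psdSqrt (posSemidef_conjTranspose_mul_self X) = cfc Real.sqrt (Xᴴ * X) := by
    rw [(posSemidef_conjTranspose_mul_self X).1.cfc_eq]
    rfl
  rw [traceNorm, hsqrt, hsq, ← cfc_comp _ _ X]
  congr 3
  funext x
  exact Real.sqrt_mul_self_eq_abs x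

lemma traceNorm_nonneg (hX : X.IsHermitian) : 0 ≤ traceNorm X := by
  rw [traceNorm_eq_re_trace_cfc_abs hX]
  exact (nonneg_iff_posSemidef.mp (cfc_nonneg fun x _ ↦ abs_nonneg x)).re_trace_nonneg

lemma traceNorm_eq_re_trace_cfc_sign_mul (hX : X.IsHermitian) :
    traceNorm X = (cfc (fun x : ℝ ↦ (SignType.sign x : ℝ)) X * X).trace.re := by
  have hmul : cfc (fun x : ℝ ↦ (SignType.sign x : ℝ)) X * X = cfc (fun x : ℝ ↦ |x|) X := by
    conv_lhs => arg 2; rw [← cfc_id' ℝ X]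
    rw [← cfc_mul _ _ X (X.finite_real_spectrum.continuousOn _)
      (X.finite_real_spectrum.continuousOn _)]
    simp only [sign_mul_self]
  rw [hmul, traceNorm_eq_re_trace_cfc_abs hX]

lemma traceNorm_le_of_mul_add_mul_eq (hA : A.IsHermitian) (hB : B.IsHermitian) (hX : X.IsHermitian)
    (h : A * B + B * A = X + X) :
    traceNorm X ≤ √(A * A).trace.re * √(B * B).trace.re := by
  set S := cfc (fun x : ℝ ↦ (SignType.sign x : ℝ)) X
  have hS : S.IsHermitian := cfc_predicate _ X
  have hS1 : (1 - S * S).PosSemidef := by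
    rw [← cfc_one ℝ X, ← cfc_mul _ _ X (X.finite_real_spectrum.continuousOn _)
      (X.finite_real_spectrum.continuousOn _), ← cfc_sub _ _ X
      (X.finite_real_spectrum.continuousOn _) (X.finite_real_spectrum.continuousOn _),
      ← nonneg_iff_posSemidef]
    refine cfc_nonneg fun x _ ↦ ?_
    cases SignType.sign x <;> simp
  have hAB := re_trace_mul_conjTranspose_mul_le hS hS1 A B
  have hBA := re_trace_mul_conjTranspose_mul_le hS hS1 B A
  rw [hA.eq, hB.eq] at hAB hBA
  have hsum : (S * (A * B)).trace.re + (S * (B * A)).trace.re = traceNorm X + traceNorm X := by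
    rw [traceNorm_eq_re_trace_cfc_sign_mul hX, ← Complex.add_re, ← trace_add, ← mul_add, h,
      mul_add, trace_add, Complex.add_re]
  linarith

end TraceNorm

section RelativeEntropy

variable {n : ℕ} {P Q : Matrix (Fin n) (Fin n) ℂ}

lemma re_trace_mul_matLog (hP : P.PosSemidef) (hQ : Q.PosSemidef) :
    (P * matLog Q).trace.re = ∑ i, ∑ j, hP.1.eigenOverlap hQ.1 i j *
      (hP.1.eigenvalues i * Real.log (hQ.1.eigenvalues j)) := by
  have hP_eq : P * matLog Q = cfc (fun x : ℝ ↦ x) P * cfc Real.log Q := by rw [matLog, cfc_id' ℝ P]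
  rw [hP_eq, hP.1.trace_cfc_mul_cfc hQ.1]
  simp [Complex.re_sum]

lemma re_trace_mul_matLog_self (hP : P.PosSemidef) :
    (P * matLog P).trace.re = ∑ i, hP.1.eigenvalues i * Real.log (hP.1.eigenvalues i) := by
  have hP_eq : P * matLog P = cfc (fun x ↦ x * Real.log x) P := by
    rw [matLog, cfc_mul _ _ P (P.finite_real_spectrum.continuousOn _)
      (P.finite_real_spectrum.continuousOn _), cfc_id' ℝ P]
  rw [hP_eq, hP.1.trace_cfc]
  simp [Complex.re_sum]

lemma re_trace_sqrt_sub_sqrt_mul_self_le (hP : P.PosSemidef) (hQ : Q.PosSemidef)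
    (hrange : LinearMap.range P.mulVecLin ≤ LinearMap.range Q.mulVecLin) :
    ((CFC.sqrt P - CFC.sqrt Q) * (CFC.sqrt P - CFC.sqrt Q)).trace.re
      ≤ relEnt P Q - (P - Q).trace.re := by
  have hkill : ∀ i j, hQ.1.eigenvalues j = 0 →
      hP.1.eigenvalues i * hP.1.eigenOverlap hQ.1 i j = 0 := fun i j hj ↦
    hP.1.eigenvalues_mul_eigenOverlap_eq_zero hQ.1 (hP.mulVec_eq_zero_of_range_le hQ.1 hrange
      (by rw [hQ.1.mulVec_eigenvectorBasis, hj, zero_smul])) i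
  rw [hP.re_trace_sqrt_sub_sqrt_mul_self hQ, relEnt, trace_sub, Complex.sub_re,
    re_trace_mul_matLog_self hP, re_trace_mul_matLog hP hQ, hP.re_trace_sqrt_mul_sqrt hQ,
    hP.1.re_trace_eq_sum_eigenvalues, hQ.1.re_trace_eq_sum_eigenvalues]
  exact sum_add_sum_sub_two_mul_sum_sqrt_le_of_mem_doublyStochastic
    (hP.1.eigenOverlap_mem_doublyStochastic hQ.1) hP.eigenvalues_nonneg hQ.eigenvalues_nonneg hkill

end RelativeEntropy

/-- **Generalized quantum Pinsker inequality** (Theorem 2 of the paper): for positive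
semidefinite matrices `P, Q` with `range P ⊆ range Q`,
`(1/4)·‖P − Q‖₁² ≤ max{Tr P, Tr Q} · (D(P‖Q) − Tr(P − Q))`. -/
theorem stmt1 {n : ℕ} (P Q : Matrix (Fin n) (Fin n) ℂ)
    (hP : P.PosSemidef) (hQ : Q.PosSemidef)
    (hrange : LinearMap.range P.mulVecLin ≤ LinearMap.range Q.mulVecLin) :
    (1 / 4) * traceNorm (P - Q) ^ 2
      ≤ max ((P.trace).re) ((Q.trace).re) * (relEnt P Q - ((P - Q).trace).re) := by
  set A := CFC.sqrt P - CFC.sqrt Q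
  set B := CFC.sqrt P + CFC.sqrt Q
  have hA : A.IsHermitian := (isHermitian_sqrt P).sub (isHermitian_sqrt Q)
  have hB : B.IsHermitian := (isHermitian_sqrt P).add (isHermitian_sqrt Q)
  have hnorm : traceNorm (P - Q) ≤ √(A * A).trace.re * √(B * B).trace.re :=
    traceNorm_le_of_mul_add_mul_eq hA hB (hP.1.sub hQ.1) (hP.sqrt_sub_sqrt_mul_sqrt_add_sqrt_add hQ)
  have hhel : (A * A).trace.re ≤ relEnt P Q - (P - Q).trace.re :=
    re_trace_sqrt_sub_sqrt_mul_self_le hP hQ hrange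
  have hpar := hP.re_trace_sqrt_sub_sqrt_mul_self_add hQ
  have hT2 : traceNorm (P - Q) ^ 2 ≤ (A * A).trace.re * (B * B).trace.re := by
    calc traceNorm (P - Q) ^ 2 ≤ (√(A * A).trace.re * √(B * B).trace.re) ^ 2 :=
          pow_le_pow_left₀ (traceNorm_nonneg (hP.1.sub hQ.1)) hnorm 2
      _ = (A * A).trace.re * (B * B).trace.re := by
        rw [mul_pow, Real.sq_sqrt hA.re_trace_mul_self_nonneg,
          Real.sq_sqrt hB.re_trace_mul_self_nonneg]
  have hB4 : (B * B).trace.re ≤ 4 * max P.trace.re Q.trace.re := by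
    linarith [hA.re_trace_mul_self_nonneg, le_max_left P.trace.re Q.trace.re,
      le_max_right P.trace.re Q.trace.re]
  have hD : 0 ≤ relEnt P Q - (P - Q).trace.re := hA.re_trace_mul_self_nonneg.trans hhel
  linarith [mul_le_mul_of_nonneg_right hhel hB.re_trace_mul_self_nonneg,
    mul_le_mul_of_nonneg_left hB4 hD]
end

section
/- Let p, q ∈ ℝⁿ be vectors with all entries strictly positive, and let M = max over all i of max(pᵢ, qᵢ). Then (1/2)·‖p − q‖₂² ≤ M · ( D(p‖q) − ⟨p⟩ + ⟨q⟩ ). -/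
open Real

/-- For `0 < y ≤ 1`, `log y ≤ y - 1 - (1-y)²/2`. -/
lemma aux_log_le {y : ℝ} (hy : 0 < y) (hy1 : y ≤ 1) :
    Real.log y ≤ y - 1 - (1 - y) ^ 2 / 2 := by
  set g : ℝ → ℝ := fun t => t - 1 - (1 - t) ^ 2 / 2 - Real.log t with hg
  have hd : ∀ t : ℝ, 0 < t →
      HasDerivAt g (1 - (↑2 * (1 - t) ^ (2 - 1) * (0 - 1)) / 2 - t⁻¹) t := by
    intro t ht
    exact (((hasDerivAt_id t).sub_const 1).sub
      ((((hasDerivAt_const t 1).sub (hasDerivAt_id t)).pow 2).div_const 2)).sub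
      (Real.hasDerivAt_log (ne_of_gt ht))
  have key : AntitoneOn g (Set.Ioc 0 1) := by
    apply antitoneOn_of_deriv_nonpos (convex_Ioc 0 1)
    · apply ContinuousOn.sub
      · fun_prop
      · exact Real.continuousOn_log.mono (fun t ht => ne_of_gt ht.1)
    · intro t ht
      rw [interior_Ioc] at ht
      exact (hd t ht.1).differentiableAt.differentiableWithinAt
    · intro t ht
      rw [interior_Ioc] at ht
      rw [(hd t ht.1).deriv]
      have h1 : (0:ℝ) < t := ht.1
      have h2 : t * t⁻¹ = 1 := mul_inv_cancel₀ (ne_of_gt h1)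
      have h3 : (0:ℝ) ≤ t⁻¹ := by positivity
      nlinarith [sq_nonneg (t - 1), sq_nonneg (t*t⁻¹ - 1)]
  have h0 : g 1 ≤ g y := key ⟨hy, hy1⟩ ⟨zero_lt_one, le_refl 1⟩ hy1
  simp [hg, Real.log_one] at h0
  linarith
/-- For `1 ≤ x`, `log x ≤ (x - x⁻¹)/2`. -/
lemma aux_log_le' {x : ℝ} (hx : 1 ≤ x) : Real.log x ≤ (x - x⁻¹) / 2 := by
  set f : ℝ → ℝ := fun t => (t - t⁻¹) / 2 - Real.log t with hf
  have hd : ∀ t : ℝ, 0 < t →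
      HasDerivAt f ((1 - -(t^2)⁻¹) / 2 - t⁻¹) t := by
    intro t ht
    exact (((hasDerivAt_id t).sub (hasDerivAt_inv (ne_of_gt ht))).div_const 2).sub
      (Real.hasDerivAt_log (ne_of_gt ht))
  have key : MonotoneOn f (Set.Ici 1) := by
    apply monotoneOn_of_deriv_nonneg (convex_Ici 1)
    · apply ContinuousOn.sub
      · apply ContinuousOn.div_const
        apply ContinuousOn.sub (continuous_id.continuousOn)
        exact continuousOn_inv₀.mono (fun t ht => by
          simp only [Set.mem_compl_iff, Set.mem_singleton_iff]
          intro h; rw [h] at ht; exact absurd ht (by norm_num))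
      · exact Real.continuousOn_log.mono (fun t ht =>
          ne_of_gt (lt_of_lt_of_le zero_lt_one ht))
    · intro t ht
      rw [interior_Ici] at ht
      exact (hd t (lt_trans zero_lt_one ht)).differentiableAt.differentiableWithinAt
    · intro t ht
      rw [interior_Ici] at ht
      have h1 : (0:ℝ) < t := lt_trans zero_lt_one ht
      rw [(hd t h1).deriv]
      have h2 : t * t⁻¹ = 1 := mul_inv_cancel₀ (ne_of_gt h1)
      have h3 : t^2 * (t^2)⁻¹ = 1 := mul_inv_cancel₀ (by positivity)
      have h4 : (t^2)⁻¹ = t⁻¹^2 := by rw [sq, sq, mul_inv]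
      rw [h4]
      nlinarith [sq_nonneg (t⁻¹ - 1)]
  have h0 : f 1 ≤ f x := key (by simp) hx hx
  simp [hf, Real.log_one] at h0
  linarith
/-- Pointwise key inequality. -/
lemma key_ineq {a b M : ℝ} (ha : 0 < a) (hb : 0 < b) (haM : a ≤ M) (hbM : b ≤ M) :
    (1/2) * (a - b)^2 ≤ M * (a * Real.log (a / b) - a + b) := by
  have hbracket : (a - b)^2 / (2 * max a b) ≤ a * Real.log (a / b) - a + b := by
    rcases le_total b a with hba | hab
    · -- a ≥ b, use aux_log_le with y = b/a
      have hy : 0 < b / a := div_pos hb ha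
      have hy1 : b / a ≤ 1 := (div_le_one ha).mpr hba
      have hlog := aux_log_le hy hy1
      have hrw : Real.log (a / b) = - Real.log (b / a) := by
        rw [← Real.log_inv]; congr 1; field_simp
      rw [hrw, max_eq_left hba]
      have h2 : a * Real.log (b / a) ≤ a * (b/a - 1 - (1 - b/a)^2/2) :=
        mul_le_mul_of_nonneg_left hlog (le_of_lt ha)
      have e : a * (b/a - 1 - (1 - b/a)^2/2) = b - a - (a-b)^2/(2*a) := by
        field_simp
      have h3 : a * (-Real.log (b/a)) = -(a * Real.log (b/a)) := by ring
      linarith [h2, e.symm ▸ h2]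
    · -- a ≤ b, use aux_log_le' with x = b/a : log(a/b) ≥ (a/b - b/a)/2
      have hx : 1 ≤ b / a := (one_le_div ha).mpr hab
      have hlog := aux_log_le' hx
      have hrw : Real.log (a / b) = - Real.log (b / a) := by
        rw [← Real.log_inv]; congr 1; field_simp
      have hinv : (b / a)⁻¹ = a / b := by field_simp
      rw [hinv] at hlog
      rw [hrw, max_eq_right hab]
      have h2 : a * Real.log (b/a) ≤ a * ((b/a - a/b)/2) :=
        mul_le_mul_of_nonneg_left hlog (le_of_lt ha)
      have e : -(a * ((b/a - a/b)/2)) - a + b = (a-b)^2/(2*b) := by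
        field_simp; ring
      have h3 : a * (-Real.log (b/a)) = -(a * Real.log (b/a)) := by ring
      linarith [h2, e, h3]
  have hMmax : max a b ≤ M := max_le haM hbM
  have hmaxpos : 0 < max a b := lt_max_of_lt_left ha
  have hbr0 : 0 ≤ a * Real.log (a / b) - a + b := by
    have := hbracket
    have h0 : 0 ≤ (a - b)^2 / (2 * max a b) := by positivity
    linarith
  calc (1/2) * (a - b)^2 = (max a b) * ((a - b)^2 / (2 * max a b)) := by
        field_simp
    _ ≤ (max a b) * (a * Real.log (a / b) - a + b) :=
        mul_le_mul_of_nonneg_left hbracket (le_of_lt hmaxpos)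
    _ ≤ M * (a * Real.log (a / b) - a + b) :=
        mul_le_mul_of_nonneg_right hMmax hbr0

/-- **Generalized Pinsker inequality, classical 2-norm version.**
Let `p, q ∈ ℝⁿ` have strictly positive entries and let `M` be the largest entry
appearing in `p` or `q`.  Then `(1/2)·‖p − q‖₂² ≤ M · (D(p‖q) − ⟨p⟩ + ⟨q⟩)`,
where `D(p‖q) = ∑ i, pᵢ ln(pᵢ/qᵢ)` is the unnormalized KL divergence. -/
theorem stmt3 {n : ℕ} (p q : Fin n → ℝ)
    (hp : ∀ i, 0 < p i) (hq : ∀ i, 0 < q i)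
    (M : ℝ) (hM : IsGreatest (Set.range p ∪ Set.range q) M) :
    (1 / 2) * (∑ i, (p i - q i) ^ 2)
      ≤ M * ((∑ i, p i * Real.log (p i / q i)) - (∑ i, p i) + (∑ i, q i)) := by
  have hpM : ∀ i, p i ≤ M := fun i => hM.2 (Or.inl ⟨i, rfl⟩)
  have hqM : ∀ i, q i ≤ M := fun i => hM.2 (Or.inr ⟨i, rfl⟩)
  have hsum : ∑ i, (1/2) * (p i - q i)^2
      ≤ ∑ i, M * (p i * Real.log (p i / q i) - p i + q i) :=
    Finset.sum_le_sum (fun i _ => key_ineq (hp i) (hq i) (hpM i) (hqM i))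
  calc (1 / 2) * (∑ i, (p i - q i) ^ 2) = ∑ i, (1/2) * (p i - q i)^2 := by
        rw [Finset.mul_sum]
    _ ≤ ∑ i, M * (p i * Real.log (p i / q i) - p i + q i) := hsum
    _ = M * ((∑ i, p i * Real.log (p i / q i)) - (∑ i, p i) + (∑ i, q i)) := by
        simp only [Finset.mul_sum, mul_sub, mul_add, Finset.sum_sub_distrib,
          Finset.sum_add_distrib]
end

section
/- Let p, q ∈ ℝⁿ be vectors with all entries strictly positive. Then (1/4)·‖p − q‖₁² ≤ max{⟨p⟩, ⟨q⟩} · ( D(p‖q) − ⟨p⟩ + ⟨q⟩ ). -/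
/-!
Pointwise, `a log (a/b) - a + b ≥ (√a - √b)²`: this is `log x ≥ 1 - 1/x` at `x = √a/√b`,
so the divergence dominates the squared Hellinger distance `H = ∑ (√pᵢ - √qᵢ)²`.
Writing `|pᵢ - qᵢ| = |√pᵢ - √qᵢ| (√pᵢ + √qᵢ)`, Cauchy–Schwarz gives
`‖p - q‖₁² ≤ H · ∑ (√pᵢ + √qᵢ)² ≤ H · 2(⟨p⟩ + ⟨q⟩) ≤ 4 max{⟨p⟩, ⟨q⟩} · H`.
-/

open Real Finset

lemma sq_sqrt_sub_sqrt_le_mul_log_div_sub_add {a b : ℝ} (ha : 0 < a) (hb : 0 < b) :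
    (√a - √b) ^ 2 ≤ a * log (a / b) - a + b := by
  have hlog := one_sub_inv_le_log_of_pos (div_pos (sqrt_pos.2 ha) (sqrt_pos.2 hb))
  have hsq : a / b = (√a / √b) ^ 2 := by rw [div_pow, sq_sqrt ha.le, sq_sqrt hb.le]
  have hmul : a * (√a / √b)⁻¹ = √a * √b := by
    field_simp
    exact (sq_sqrt ha.le).symm
  rw [hsq, log_pow]
  nlinarith [mul_le_mul_of_nonneg_left hlog ha.le, sq_sqrt ha.le, sq_sqrt hb.le]

lemma abs_sub_eq_abs_sqrt_sub_mul_sqrt_add {a b : ℝ} (ha : 0 ≤ a) (hb : 0 ≤ b) :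
    |a - b| = |√a - √b| * (√a + √b) := by
  rw [← abs_of_nonneg (add_nonneg (sqrt_nonneg a) (sqrt_nonneg b)), ← abs_mul]
  congr 1
  linear_combination sq_sqrt hb - sq_sqrt ha

lemma sq_sum_abs_sub_le_mul_sum_sq_sqrt_sub {ι : Type*} (s : Finset ι) {p q : ι → ℝ}
    (hp : ∀ i ∈ s, 0 ≤ p i) (hq : ∀ i ∈ s, 0 ≤ q i) :
    (∑ i ∈ s, |p i - q i|) ^ 2
      ≤ 2 * (∑ i ∈ s, (p i + q i)) * ∑ i ∈ s, (√(p i) - √(q i)) ^ 2 := by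
  have hsum : ∑ i ∈ s, (√(p i) + √(q i)) ^ 2 ≤ 2 * ∑ i ∈ s, (p i + q i) := by
    rw [mul_sum]
    refine sum_le_sum fun i hi => ?_
    simpa only [sq_sqrt (hp i hi), sq_sqrt (hq i hi)] using add_sq_le (a := √(p i)) (b := √(q i))
  calc (∑ i ∈ s, |p i - q i|) ^ 2
      = (∑ i ∈ s, |√(p i) - √(q i)| * (√(p i) + √(q i))) ^ 2 := by
        rw [sum_congr rfl fun i hi => abs_sub_eq_abs_sqrt_sub_mul_sqrt_add (hp i hi) (hq i hi)]
    _ ≤ (∑ i ∈ s, |√(p i) - √(q i)| ^ 2) * ∑ i ∈ s, (√(p i) + √(q i)) ^ 2 :=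
        sum_mul_sq_le_sq_mul_sq _ _ _
    _ ≤ (∑ i ∈ s, (√(p i) - √(q i)) ^ 2) * (2 * ∑ i ∈ s, (p i + q i)) := by
        simp only [sq_abs]
        gcongr
    _ = _ := by ring

/-- **Generalized Pinsker inequality, classical 1-norm version.**
Let `p, q ∈ ℝⁿ` have strictly positive entries.  Then
`(1/4)·‖p − q‖₁² ≤ max{⟨p⟩, ⟨q⟩} · (D(p‖q) − ⟨p⟩ + ⟨q⟩)`,
where `D(p‖q) = ∑ i, pᵢ ln(pᵢ/qᵢ)` is the unnormalized KL divergence. -/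
theorem stmt4 {n : ℕ} (p q : Fin n → ℝ)
    (hp : ∀ i, 0 < p i) (hq : ∀ i, 0 < q i) :
    (1 / 4) * (∑ i, |p i - q i|) ^ 2
      ≤ max (∑ i, p i) (∑ i, q i)
        * ((∑ i, p i * Real.log (p i / q i)) - (∑ i, p i) + (∑ i, q i)) := by
  have hellinger_le : ∑ i, (√(p i) - √(q i)) ^ 2
      ≤ (∑ i, p i * log (p i / q i)) - (∑ i, p i) + (∑ i, q i) := by
    rw [← sum_sub_distrib, ← sum_add_distrib]
    exact sum_le_sum fun i _ => sq_sqrt_sub_sqrt_le_mul_log_div_sub_add (hp i) (hq i)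
  have hmass : ∑ i, (p i + q i) ≤ 2 * max (∑ i, p i) (∑ i, q i) := by
    rw [sum_add_distrib]
    linarith [le_max_left (∑ i, p i) (∑ i, q i), le_max_right (∑ i, p i) (∑ i, q i)]
  have hmass_nonneg : 0 ≤ ∑ i, (p i + q i) := sum_nonneg fun i _ => (add_pos (hp i) (hq i)).le
  calc (1 / 4) * (∑ i, |p i - q i|) ^ 2
      ≤ (1 / 4) * (2 * (∑ i, (p i + q i)) * ∑ i, (√(p i) - √(q i)) ^ 2) := by
        gcongr
        exact sq_sum_abs_sub_le_mul_sum_sq_sqrt_sub univ (fun i _ => (hp i).le)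
          (fun i _ => (hq i).le)
    _ ≤ (1 / 4) * (2 * (2 * max (∑ i, p i) (∑ i, q i))
          * ((∑ i, p i * log (p i / q i)) - (∑ i, p i) + (∑ i, q i))) := by
        gcongr
        linarith
    _ = _ := by ring
end

section
/- For each natural number n ≥ 3, let p_n = (1/2 + 1/n, 1/2 − 1/n) and q_n = (1/2, 1/2) be two-dimensional probability vectors, let D(p_n‖q_n) = (1/2 + 1/n)·ln((1/2 + 1/n)/(1/2)) + (1/2 − 1/n)·ln((1/2 − 1/n)/(1/2)) be the KL divergence, let C_n = (1/2 + 1/n)⁻¹ and note the total variational distance is Δ(p_n, q_n) = 1/n. Then the ratio D(p_n‖q_n) / (C_n · (1/n)²) tends to 1 as n → ∞; equivalently, the sequence n² · (1/2 + 1/n) · D(p_n‖q_n) converges to 1. -/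
/-!
Put `x = 1/n`, so that `D(pₙ‖qₙ) = (1/2 + x) log (1 + 2x) + (1/2 - x) log (1 - 2x)`.
Inserting `log (1 + t) = t - t²/2 + O(t³)`, the linear terms cancel and the quadratic ones add
up to `2x²`, so `D(pₙ‖qₙ) = 2x² + O(x³)` and `n² (1/2 + x) D(pₙ‖qₙ) → (1/2) · 2 = 1`.
-/

open Filter Topology Real

theorem abs_log_one_add_sub_le {t : ℝ} (ht : |t| ≤ 1 / 2) :
    |log (1 + t) - (t - t ^ 2 / 2)| ≤ 2 * |t| ^ 3 := by
  have h := abs_log_sub_add_sum_range_le (x := -t) (by rw [abs_neg]; linarith) 2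
  have hsum : ∑ i ∈ Finset.range 2, (-t) ^ (i + 1) / (i + 1 : ℝ) = -(t - t ^ 2 / 2) := by
    norm_num [Finset.sum_range_succ]; ring
  rw [hsum, abs_neg, sub_neg_eq_add, neg_add_eq_sub] at h
  refine h.trans ?_
  rw [div_le_iff₀ (by linarith), show 2 + 1 = 3 from rfl]
  nlinarith [pow_nonneg (abs_nonneg t) 3]

/-- `D((1/2 + x, 1/2 - x) ‖ (1/2, 1/2))`. -/
noncomputable def klHalf (x : ℝ) : ℝ :=
  (1 / 2 + x) * log ((1 / 2 + x) / (1 / 2)) + (1 / 2 - x) * log ((1 / 2 - x) / (1 / 2))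

theorem abs_klHalf_sub_le {x : ℝ} (hx : |x| ≤ 1 / 4) :
    |klHalf x - 2 * x ^ 2| ≤ 16 * |x| ^ 3 := by
  obtain ⟨hx₁, hx₂⟩ := abs_le.mp hx
  have hpos := abs_log_one_add_sub_le (t := 2 * x) (by rw [abs_mul, abs_two]; linarith)
  have hneg := abs_log_one_add_sub_le (t := -(2 * x)) (by rw [abs_neg, abs_mul, abs_two]; linarith)
  rw [abs_neg, abs_mul, abs_two] at hneg
  rw [abs_mul, abs_two] at hpos
  have hsplit : klHalf x - 2 * x ^ 2 =
      (1 / 2 + x) * (log (1 + 2 * x) - (2 * x - (2 * x) ^ 2 / 2)) +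
        (1 / 2 - x) * (log (1 + -(2 * x)) - (-(2 * x) - (-(2 * x)) ^ 2 / 2)) := by
    rw [klHalf, show (1 / 2 + x) / (1 / 2) = 1 + 2 * x by ring,
      show (1 / 2 - x) / (1 / 2) = 1 + -(2 * x) by ring]
    ring
  rw [hsplit]
  calc _ ≤ (1 / 2 + x) * (2 * (2 * |x|) ^ 3) + (1 / 2 - x) * (2 * (2 * |x|) ^ 3) := by
        refine (abs_add_le _ _).trans (add_le_add ?_ ?_) <;> rw [abs_mul, abs_of_nonneg (by linarith)]
        · exact mul_le_mul_of_nonneg_left hpos (by linarith)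
        · exact mul_le_mul_of_nonneg_left hneg (by linarith)
    _ = 16 * |x| ^ 3 := by ring

theorem tendsto_klHalf_div_sq : Tendsto (fun x => klHalf x / x ^ 2) (𝓝[≠] 0) (𝓝 2) := by
  rw [← tendsto_sub_nhds_zero_iff]
  have hbound : ∀ᶠ x in 𝓝[≠] (0 : ℝ), ‖klHalf x / x ^ 2 - 2‖ ≤ 16 * |x| := by
    filter_upwards [self_mem_nhdsWithin,
      nhdsWithin_le_nhds (Metric.closedBall_mem_nhds (0 : ℝ) (by norm_num : (0 : ℝ) < 1 / 4))]
      with x (hx0 : x ≠ 0) hx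
    rw [Metric.mem_closedBall, dist_zero_right, norm_eq_abs] at hx
    have hx2 : 0 < x ^ 2 := by positivity
    have hdiv : klHalf x / x ^ 2 - 2 = (klHalf x - 2 * x ^ 2) / x ^ 2 := by field_simp
    rw [norm_eq_abs, hdiv, abs_div, abs_of_pos hx2, div_le_iff₀ hx2]
    calc _ ≤ 16 * |x| ^ 3 := abs_klHalf_sub_le hx
      _ = 16 * |x| * x ^ 2 := by rw [← sq_abs x]; ring
  refine squeeze_zero_norm' hbound (tendsto_nhdsWithin_of_tendsto_nhds ?_)
  simpa using (continuous_abs.tendsto (0 : ℝ)).const_mul 16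

/-- **Sharpness of the generalized Pinsker inequality.**
For `pₙ = (1/2 + 1/n, 1/2 − 1/n)` and `qₙ = (1/2, 1/2)`, with
`Cₙ = (1/2 + 1/n)⁻¹` and total variational distance `Δ(pₙ, qₙ) = 1/n`, the ratio
`D(pₙ‖qₙ) / (Cₙ·(1/n)²)`, i.e. the sequence `n²·(1/2 + 1/n)·D(pₙ‖qₙ)`,
tends to `1` as `n → ∞`. -/
theorem stmt6 :
    Filter.Tendsto
      (fun n : ℕ =>
        (n : ℝ) ^ 2 * (1 / 2 + 1 / n) *
          ((1 / 2 + 1 / (n : ℝ)) * Real.log ((1 / 2 + 1 / (n : ℝ)) / (1 / 2))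
            + (1 / 2 - 1 / (n : ℝ)) * Real.log ((1 / 2 - 1 / (n : ℝ)) / (1 / 2))))
      Filter.atTop (nhds 1) := by
  have hinv : Tendsto (fun n : ℕ => 1 / (n : ℝ)) atTop (𝓝[≠] 0) :=
    tendsto_nhdsWithin_iff.mpr ⟨tendsto_one_div_atTop_nhds_zero_nat,
      eventually_atTop.mpr ⟨1, fun n hn => one_div_ne_zero (Nat.cast_ne_zero.mpr (by omega))⟩⟩
  have hlim : Tendsto (fun n : ℕ => (1 / 2 + 1 / (n : ℝ)) * (klHalf (1 / n) / (1 / n) ^ 2))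
      atTop (𝓝 ((1 / 2 + 0) * 2)) :=
    (tendsto_const_nhds.add (tendsto_nhdsWithin_iff.mp hinv).1).mul
      (tendsto_klHalf_div_sq.comp hinv)
  rw [show ((1 / 2 + 0) * 2 : ℝ) = 1 by norm_num] at hlim
  refine hlim.congr' (eventually_atTop.mpr ⟨1, fun n hn => ?_⟩)
  have hn0 : (n : ℝ) ≠ 0 := Nat.cast_ne_zero.mpr (by omega)
  rw [klHalf]
  field_simp
end

section
/- Let n ≥ 1 and α > 0. The value max{ S(X) : X an n×n complex positive semidefinite matrix with Re Tr X ≤ α } equals e⁻¹·n when α ≥ e⁻¹·n, and equals −α·ln α + α·ln n when α ≤ e⁻¹·n. That is: every positive semidefinite X with Re Tr X ≤ α satisfies S(X) ≤ e⁻¹·n (resp. S(X) ≤ −α·ln α + α·ln n in the second case), and the bound is attained by X = e⁻¹·I (resp. X = (α/n)·I). -/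
open Matrix
open scoped ComplexOrder

/-- The von Neumann entropy `S(X) = −Re Tr(X · log X)`. -/
noncomputable def vnEntropy {n : ℕ} (X : Matrix (Fin n) (Fin n) ℂ) : ℝ :=
  -((X * matLog X).trace).re

/-!
Diagonalising, `S(X) = ∑ negMulLog λᵢ` over the eigenvalues `λᵢ ≥ 0` of `X`. Since `negMulLog`
is concave, it lies below its tangent line at any `c > 0`, which reads
`negMulLog x ≤ c - x - x log c`; summing gives `S(X) ≤ n c - (1 + log c) Tr X`. At `c = e⁻¹` the
coefficient of `Tr X` vanishes and the bound is `n/e`; for `c = α/n ≤ e⁻¹` it is nonpositive, so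
`Tr X ≤ α` gives `S(X) ≤ n·negMulLog c`. Both bounds are attained at `c • 1`.
-/

open Real

lemma Real.negMulLog_le_sub_sub_mul_log {c x : ℝ} (hc : 0 < c) (hx : 0 ≤ x) :
    negMulLog x ≤ c - x - x * log c := by
  have hsplit : negMulLog x = x / c * negMulLog c + c * negMulLog (x / c) := by
    rw [← negMulLog_mul, mul_div_cancel₀ _ hc.ne']
  have hscaled := negMulLog_le_one_sub_self (div_nonneg hx hc.le)
  have hfirst : x / c * negMulLog c = -(x * log c) := by
    rw [negMulLog]; field_simp
  have hsecond : c * negMulLog (x / c) ≤ c - x := by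
    calc c * negMulLog (x / c) ≤ c * (1 - x / c) := mul_le_mul_of_nonneg_left hscaled hc.le
      _ = c - x := by field_simp
  linarith

lemma Real.negMulLog_inv_exp_one : negMulLog (exp 1)⁻¹ = (exp 1)⁻¹ := by
  simp [negMulLog, log_inv]

namespace Matrix

variable {ι 𝕜 : Type*} [Fintype ι] [DecidableEq ι] [RCLike 𝕜] {A : Matrix ι ι 𝕜}

lemma IsHermitian.trace_cfc_s7 (hA : A.IsHermitian) (f : ℝ → ℝ) :
    (cfc f A).trace = ∑ i, (f (hA.eigenvalues i) : 𝕜) := by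
  rw [hA.cfc_eq, IsHermitian.cfc, Unitary.conjStarAlgAut_apply, trace_mul_cycle,
    Unitary.coe_star_mul_self, one_mul, trace_diagonal]
  rfl

lemma IsHermitian.mul_cfc (hA : A.IsHermitian) (f : ℝ → ℝ) :
    A * cfc f A = cfc (fun x => x * f x) A := by
  nth_rw 1 [← cfc_id' ℝ A]
  exact (cfc_mul _ _ A (A.finite_real_spectrum.continuousOn _)
    (A.finite_real_spectrum.continuousOn _)).symm

end Matrix

lemma vnEntropy_eq_sum_negMulLog {n : ℕ} {X : Matrix (Fin n) (Fin n) ℂ} (hX : X.IsHermitian) :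
    vnEntropy X = ∑ i, negMulLog (hX.eigenvalues i) := by
  rw [vnEntropy, matLog, hX.mul_cfc, hX.trace_cfc_s7, Complex.re_sum, ← Finset.sum_neg_distrib]
  simp [negMulLog]

lemma vnEntropy_le_sub_mul_re_trace {n : ℕ} {X : Matrix (Fin n) (Fin n) ℂ} (hX : X.PosSemidef)
    {c : ℝ} (hc : 0 < c) : vnEntropy X ≤ n * c - (1 + log c) * (X.trace).re := by
  have htrace : (X.trace).re = ∑ i, hX.1.eigenvalues i := by
    simp [hX.1.trace_eq_sum_eigenvalues]
  calc vnEntropy X = ∑ i, negMulLog (hX.1.eigenvalues i) := vnEntropy_eq_sum_negMulLog hX.1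
    _ ≤ ∑ i, (c - hX.1.eigenvalues i - hX.1.eigenvalues i * log c) :=
      Finset.sum_le_sum fun i _ => negMulLog_le_sub_sub_mul_log hc (hX.eigenvalues_nonneg i)
    _ = n * c - (1 + log c) * (X.trace).re := by
      rw [htrace, Finset.sum_sub_distrib, Finset.sum_sub_distrib, ← Finset.sum_mul]
      simp only [Finset.sum_const, Finset.card_univ, Fintype.card_fin, nsmul_eq_mul]
      ring

lemma re_trace_real_smul_one {ι : Type*} [Fintype ι] [DecidableEq ι] (c : ℝ) :
    ((c • (1 : Matrix ι ι ℂ)).trace).re = Fintype.card ι * c := by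
  simp [trace_smul, mul_comm]

lemma vnEntropy_real_smul_one {n : ℕ} (c : ℝ) :
    vnEntropy (c • (1 : Matrix (Fin n) (Fin n) ℂ)) = n * negMulLog c := by
  rw [vnEntropy, matLog, ← Algebra.algebraMap_eq_smul_one, cfc_algebraMap, ← map_mul,
    Algebra.algebraMap_eq_smul_one, re_trace_real_smul_one, Fintype.card_fin, negMulLog]
  ring

lemma vnEntropy_le_inv_exp_mul {n : ℕ} {X : Matrix (Fin n) (Fin n) ℂ} (hX : X.PosSemidef) :
    vnEntropy X ≤ (exp 1)⁻¹ * n := by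
  simpa [log_inv, mul_comm] using vnEntropy_le_sub_mul_re_trace hX (inv_pos.2 (exp_pos 1))

lemma vnEntropy_le_of_re_trace_le {n : ℕ} {X : Matrix (Fin n) (Fin n) ℂ} (hX : X.PosSemidef)
    {c : ℝ} (hc : 0 < c) (hce : c ≤ (exp 1)⁻¹) (htr : (X.trace).re ≤ n * c) :
    vnEntropy X ≤ n * negMulLog c := by
  have hslope : 1 + log c ≤ 0 := by
    have := log_le_log hc hce
    rw [log_inv, log_exp] at this
    linarith
  calc vnEntropy X ≤ n * c - (1 + log c) * (X.trace).re := vnEntropy_le_sub_mul_re_trace hX hc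
    _ ≤ n * c - (1 + log c) * (n * c) := by linarith [mul_le_mul_of_nonpos_left htr hslope]
    _ = n * negMulLog c := by rw [negMulLog]; ring

theorem stmt7_general {n : ℕ} (α : ℝ) (hα : 0 < α) :
    ((Real.exp 1)⁻¹ * n ≤ α →
      (∀ X : Matrix (Fin n) (Fin n) ℂ, X.PosSemidef → (X.trace).re ≤ α →
        vnEntropy X ≤ (Real.exp 1)⁻¹ * n)
      ∧ ((Real.exp 1)⁻¹ • (1 : Matrix (Fin n) (Fin n) ℂ)).PosSemidef
      ∧ (((Real.exp 1)⁻¹ • (1 : Matrix (Fin n) (Fin n) ℂ)).trace).re ≤ α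
      ∧ vnEntropy ((Real.exp 1)⁻¹ • (1 : Matrix (Fin n) (Fin n) ℂ)) = (Real.exp 1)⁻¹ * n)
    ∧ (α ≤ (Real.exp 1)⁻¹ * n →
      (∀ X : Matrix (Fin n) (Fin n) ℂ, X.PosSemidef → (X.trace).re ≤ α →
        vnEntropy X ≤ -α * Real.log α + α * Real.log n)
      ∧ ((α / n) • (1 : Matrix (Fin n) (Fin n) ℂ)).PosSemidef
      ∧ (((α / n) • (1 : Matrix (Fin n) (Fin n) ℂ)).trace).re ≤ α
      ∧ vnEntropy ((α / n) • (1 : Matrix (Fin n) (Fin n) ℂ)) = -α * Real.log α + α * Real.log n) := by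
  refine ⟨fun hlarge => ⟨fun X hX _ => vnEntropy_le_inv_exp_mul hX, PosSemidef.one.smul
    (by positivity), ?_, ?_⟩, fun hsmall => ?_⟩
  · rw [re_trace_real_smul_one, Fintype.card_fin, mul_comm]
    exact hlarge
  · rw [vnEntropy_real_smul_one, negMulLog_inv_exp_one, mul_comm]
  have hn : (0 : ℝ) < n := pos_of_mul_pos_right (hα.trans_le hsmall) (by positivity)
  have hc : α / n ≤ (exp 1)⁻¹ := by rwa [div_le_iff₀ hn]
  have htrace : ((α / n) • (1 : Matrix (Fin n) (Fin n) ℂ)).trace.re = α := by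
    rw [re_trace_real_smul_one, Fintype.card_fin, mul_div_cancel₀ _ hn.ne']
  have hvalue : n * negMulLog (α / n) = -α * log α + α * log n := by
    rw [negMulLog, log_div hα.ne' hn.ne']
    field_simp
    ring
  refine ⟨fun X hX htr => ?_, PosSemidef.one.smul (by positivity), htrace.le, ?_⟩
  · rw [← hvalue]
    exact vnEntropy_le_of_re_trace_le hX (by positivity) hc (by rwa [mul_div_cancel₀ _ hn.ne'])
  · rw [vnEntropy_real_smul_one, hvalue]

/-- **Maximal von Neumann entropy under a trace constraint** (Lemma 13 of the paper,
maximization part): over positive semidefinite `X` with `Re Tr X ≤ α`, the maximum of `S(X)`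
is `e⁻¹·n` if `α ≥ e⁻¹·n` (attained at `e⁻¹·I`) and `−α ln α + α ln n` if `α ≤ e⁻¹·n`
(attained at `(α/n)·I`). -/
theorem stmt7 {n : ℕ} (hn : 1 ≤ n) (α : ℝ) (hα : 0 < α) :
    ((Real.exp 1)⁻¹ * n ≤ α →
      (∀ X : Matrix (Fin n) (Fin n) ℂ, X.PosSemidef → (X.trace).re ≤ α →
        vnEntropy X ≤ (Real.exp 1)⁻¹ * n)
      ∧ ((Real.exp 1)⁻¹ • (1 : Matrix (Fin n) (Fin n) ℂ)).PosSemidef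
      ∧ (((Real.exp 1)⁻¹ • (1 : Matrix (Fin n) (Fin n) ℂ)).trace).re ≤ α
      ∧ vnEntropy ((Real.exp 1)⁻¹ • (1 : Matrix (Fin n) (Fin n) ℂ)) = (Real.exp 1)⁻¹ * n)
    ∧ (α ≤ (Real.exp 1)⁻¹ * n →
      (∀ X : Matrix (Fin n) (Fin n) ℂ, X.PosSemidef → (X.trace).re ≤ α →
        vnEntropy X ≤ -α * Real.log α + α * Real.log n)
      ∧ ((α / n) • (1 : Matrix (Fin n) (Fin n) ℂ)).PosSemidef
      ∧ (((α / n) • (1 : Matrix (Fin n) (Fin n) ℂ)).trace).re ≤ α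
      ∧ vnEntropy ((α / n) • (1 : Matrix (Fin n) (Fin n) ℂ)) = -α * Real.log α + α * Real.log n) :=
  stmt7_general α hα
end

section
/- Let n ≥ 1 and α > 0. The value min{ S(X) : X an n×n complex positive semidefinite matrix with Re Tr X ≤ α } equals 0 when α ≤ 1, and equals −α·ln α when α ≥ 1. That is: every positive semidefinite X with Re Tr X ≤ α satisfies S(X) ≥ 0 (resp. S(X) ≥ −α·ln α in the second case), and the bound is attained by the zero matrix (resp. by X = α·v·v* for any unit vector v ∈ ℂⁿ). -/
open Matrix
open scoped ComplexOrder

/-!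
Over the eigenvalues `λᵢ ≥ 0` of `X`, `S(X) = ∑ negMulLog λᵢ`, and since each `λᵢ ≤ t := Re Tr X`,
`∑ λᵢ log λᵢ ≤ ∑ λᵢ log t = t log t`. Hence `S(X) ≥ -t log t`, which is `≥ 0` for `t ≤ α ≤ 1`
and `≥ -α log α` for `t ≤ α`, `1 ≤ α`. The matrix `X = α • v v*` satisfies `X * X = α • X`, so its
spectrum lies in `{0, α}`, where `t log t = (log α) t`; thus `X log X = (log α) • X` and
`S(X) = -α log α`.
-/

open Real

namespace Real

lemma mul_log_le_mul_log_of_le {x y : ℝ} (hx : 0 ≤ x) (hxy : x ≤ y) : x * log x ≤ x * log y := by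
  rcases hx.eq_or_lt with rfl | hx
  · simp
  · exact mul_le_mul_of_nonneg_left (log_le_log hx hxy) hx.le

lemma negMulLog_sum_le_sum_negMulLog {ι : Type*} (s : Finset ι) {w : ι → ℝ}
    (hw : ∀ i ∈ s, 0 ≤ w i) : negMulLog (∑ i ∈ s, w i) ≤ ∑ i ∈ s, negMulLog (w i) := by
  simp only [negMulLog, neg_mul, Finset.sum_neg_distrib, neg_le_neg_iff, Finset.sum_mul]
  exact Finset.sum_le_sum fun i hi ↦
    mul_log_le_mul_log_of_le (hw i hi) (Finset.single_le_sum hw hi)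

lemma negMulLog_le_negMulLog_of_le_of_one_le {t α : ℝ} (ht : 0 ≤ t) (htα : t ≤ α) (hα : 1 ≤ α) :
    negMulLog α ≤ negMulLog t := by
  simp only [negMulLog, neg_mul, neg_le_neg_iff]
  calc t * log t ≤ t * log α := mul_log_le_mul_log_of_le ht htα
    _ ≤ α * log α := mul_le_mul_of_nonneg_right htα (log_nonneg hα)

end Real

section CFC

variable {A : Type*} [Ring A] [StarRing A] [TopologicalSpace A] [Algebra ℝ A]
  [ContinuousFunctionalCalculus ℝ A IsSelfAdjoint]

lemma spectrum_subset_of_mul_self_eq_smul {a : A} {c : ℝ} (ha : IsSelfAdjoint a)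
    (h : a * a = c • a) : spectrum ℝ a ⊆ {0, c} := by
  have hcfc : cfc (fun t : ℝ ↦ t * t - c * t) a = cfc (fun _ ↦ (0 : ℝ)) a := by
    rw [cfc_sub _ _, cfc_mul _ _, cfc_const_mul_id c a, cfc_id' ℝ a, h, sub_self,
      cfc_const_zero]
  intro t ht
  have ht' : t * (t - c) = 0 := by linear_combination (eqOn_of_cfc_eq_cfc hcfc) ht
  simpa [sub_eq_zero] using ht'

end CFC

section Hermitian

variable {𝕜 ι : Type*} [RCLike 𝕜] [Fintype ι] [DecidableEq ι] {A : Matrix ι ι 𝕜}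

lemma Matrix.IsHermitian.trace_cfc_s8 (hA : A.IsHermitian) (f : ℝ → ℝ) :
    (cfc f A).trace = ∑ i, (f (hA.eigenvalues i) : 𝕜) := by
  rw [hA.cfc_eq, Matrix.IsHermitian.cfc, Unitary.conjStarAlgAut_apply, trace_mul_cycle,
    Unitary.star_mul_self_of_mem (SetLike.coe_mem hA.eigenvectorUnitary), one_mul,
    trace_diagonal]
  rfl

lemma Matrix.IsHermitian.re_trace_eq_sum_eigenvalues_s8 (hA : A.IsHermitian) :
    RCLike.re A.trace = ∑ i, hA.eigenvalues i := by
  simp [hA.trace_eq_sum_eigenvalues]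

lemma Matrix.IsHermitian.mul_cfc_s8 (hA : A.IsHermitian) (f : ℝ → ℝ) :
    A * cfc f A = cfc (fun t ↦ t * f t) A := by
  rw [cfc_mul (fun t ↦ t) f A (finite_real_spectrum.continuousOn _)
    (finite_real_spectrum.continuousOn _),
    cfc_id' ℝ A hA.isSelfAdjoint]

end Hermitian

lemma Matrix.PosSemidef.re_trace_nonneg_s8 {ι : Type*} [Fintype ι] {X : Matrix ι ι ℂ}
    (hX : X.PosSemidef) : 0 ≤ X.trace.re :=
  (Complex.nonneg_iff.mp hX.trace_nonneg).1

lemma Matrix.PosSemidef.negMulLog_re_trace_le_vnEntropy {n : ℕ} {X : Matrix (Fin n) (Fin n) ℂ}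
    (hX : X.PosSemidef) : negMulLog X.trace.re ≤ vnEntropy X := by
  rw [vnEntropy_eq_sum_negMulLog hX.1, ← RCLike.re_to_complex, hX.1.re_trace_eq_sum_eigenvalues_s8]
  exact negMulLog_sum_le_sum_negMulLog _ fun i _ ↦ hX.eigenvalues_nonneg i

lemma vnEntropy_eq_of_mul_self_eq_smul {n : ℕ} {X : Matrix (Fin n) (Fin n) ℂ} {c : ℝ}
    (hX : X.IsHermitian) (h : X * X = c • X) : vnEntropy X = -(X.trace.re * log c) := by
  have hspec := spectrum_subset_of_mul_self_eq_smul hX.isSelfAdjoint h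
  have hlin : cfc (fun t ↦ t * log t) X = cfc (fun t ↦ log c * t) X := by
    refine cfc_congr fun t ht ↦ ?_
    rcases hspec ht with rfl | rfl <;> simp [mul_comm]
  rw [vnEntropy, matLog, hX.mul_cfc_s8, hlin, cfc_const_mul_id (log c) X, trace_smul]
  simp [mul_comm]

lemma star_dotProduct_self_eq_sum_norm_sq {ι : Type*} [Fintype ι] (v : ι → ℂ) :
    star v ⬝ᵥ v = ((∑ i, ‖v i‖ ^ 2 : ℝ) : ℂ) := by
  simp [dotProduct, RCLike.conj_mul]

lemma vecMulVec_self_star_mul_self {ι : Type*} [Fintype ι] {v : ι → ℂ} (hv : star v ⬝ᵥ v = 1) :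
    vecMulVec v (star v) * vecMulVec v (star v) = vecMulVec v (star v) := by
  rw [vecMulVec_mul_vecMulVec, hv, one_smul]

theorem stmt8_general {n : ℕ} (α : ℝ) :
    (α ≤ 1 →
      (∀ X : Matrix (Fin n) (Fin n) ℂ, X.PosSemidef → (X.trace).re ≤ α → 0 ≤ vnEntropy X)
      ∧ vnEntropy (0 : Matrix (Fin n) (Fin n) ℂ) = 0)
    ∧ (1 ≤ α →
      (∀ X : Matrix (Fin n) (Fin n) ℂ, X.PosSemidef → (X.trace).re ≤ α →
        -α * Real.log α ≤ vnEntropy X)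
      ∧ (∀ v : Fin n → ℂ, (∑ i, ‖v i‖ ^ 2) = 1 →
          (α • Matrix.vecMulVec v (star v)).PosSemidef
          ∧ ((α • Matrix.vecMulVec v (star v)).trace).re ≤ α
          ∧ vnEntropy (α • Matrix.vecMulVec v (star v)) = -α * Real.log α)) := by
  refine ⟨fun hα ↦ ⟨fun X hX htr ↦ ?_, by simp [vnEntropy]⟩,
    fun hα ↦ ⟨fun X hX htr ↦ ?_, fun v hv ↦ ?_⟩⟩
  · exact (negMulLog_nonneg hX.re_trace_nonneg_s8 (htr.trans hα)).trans
      hX.negMulLog_re_trace_le_vnEntropy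
  · exact (negMulLog_le_negMulLog_of_le_of_one_le hX.re_trace_nonneg_s8 htr hα).trans
      hX.negMulLog_re_trace_le_vnEntropy
  · have hunit : star v ⬝ᵥ v = 1 := by rw [star_dotProduct_self_eq_sum_norm_sq, hv]; simp
    have hpsd := (posSemidef_vecMulVec_self_star v).smul (zero_le_one.trans hα)
    have htr : (α • vecMulVec v (star v)).trace.re = α := by
      simp [trace_smul, dotProduct_comm v, hunit]
    have hidem : (α • vecMulVec v (star v)) * (α • vecMulVec v (star v)) =
        α • (α • vecMulVec v (star v)) := by
      rw [smul_mul_smul_comm, vecMulVec_self_star_mul_self hunit, smul_smul]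
    refine ⟨hpsd, htr.le, ?_⟩
    rw [vnEntropy_eq_of_mul_self_eq_smul hpsd.1 hidem, htr, neg_mul]

/-- **Minimal von Neumann entropy under a trace constraint** (Lemma 13 of the paper,
minimization part): over positive semidefinite `X` with `Re Tr X ≤ α`, the minimum of `S(X)`
is `0` if `α ≤ 1` (attained at the zero matrix) and `−α ln α` if `α ≥ 1` (attained at
`α·v·v*` for any unit vector `v`). -/
theorem stmt8 {n : ℕ} (hn : 1 ≤ n) (α : ℝ) (hα : 0 < α) :
    (α ≤ 1 →
      (∀ X : Matrix (Fin n) (Fin n) ℂ, X.PosSemidef → (X.trace).re ≤ α → 0 ≤ vnEntropy X)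
      ∧ vnEntropy (0 : Matrix (Fin n) (Fin n) ℂ) = 0)
    ∧ (1 ≤ α →
      (∀ X : Matrix (Fin n) (Fin n) ℂ, X.PosSemidef → (X.trace).re ≤ α →
        -α * Real.log α ≤ vnEntropy X)
      ∧ (∀ v : Fin n → ℂ, (∑ i, ‖v i‖ ^ 2) = 1 →
          (α • Matrix.vecMulVec v (star v)).PosSemidef
          ∧ ((α • Matrix.vecMulVec v (star v)).trace).re ≤ α
          ∧ vnEntropy (α • Matrix.vecMulVec v (star v)) = -α * Real.log α)) :=
  stmt8_general α
end

section
/- Let n ≥ 1, let A ≥ 1 be a real number, and let K be a set of n×n complex positive semidefinite matrices such that Re Tr X ≤ A for every X ∈ K. Then for all φ, φ' ∈ K: if A ≤ e⁻¹·n then S(φ) − S(φ') ≤ A·ln n, and if A ≥ e⁻¹·n then S(φ) − S(φ') ≤ e⁻¹·n + A·ln A. -/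
open Matrix
open scoped ComplexOrder

/-! Both entropies are sums `∑ negMulLog λᵢ` over the eigenvalues `λᵢ ≥ 0` of a positive
semidefinite matrix, with `∑ λᵢ = Re Tr`. The subtracted entropy is at least `-A log A`, termwise
from `λᵢ ≤ A`. The other one is at most `n · max negMulLog = n/e`, and by Jensen's inequality for
the concave `negMulLog` it is also at most `t log (n / t)` with `t = Re Tr φ ≤ A`; as
`t ↦ t log (n / t)` increases on `[0, n/e]`, this is at most `A log n - A log A` when `A ≤ n/e`. -/

open Real

namespace Real

/-- The tangent line of the concave function `negMulLog` at `a`. -/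
lemma negMulLog_le_sub_sub_mul_log_s10 {t a : ℝ} (ht : 0 ≤ t) (ha : 0 < a) :
    negMulLog t ≤ a - t - t * log a := by
  calc negMulLog t = t / a * negMulLog a + a * negMulLog (t / a) := by
        rw [← negMulLog_mul, mul_div_cancel₀ t ha.ne']
    _ ≤ t / a * negMulLog a + a * (1 - t / a) := by
        gcongr; exact negMulLog_le_one_sub_self (div_nonneg ht ha.le)
    _ = a - t - t * log a := by
        rw [negMulLog]; field_simp; ring

lemma negMulLog_le_inv_exp_one {t : ℝ} (ht : 0 ≤ t) : negMulLog t ≤ (exp 1)⁻¹ := by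
  simpa [← exp_neg] using negMulLog_le_sub_sub_mul_log_s10 ht (exp_pos (-1))

lemma negMulLog_add_mul_log_le {t a N : ℝ} (ht : 0 ≤ t) (hta : t ≤ a) (ha : 0 < a)
    (haN : exp 1 * a ≤ N) :
    negMulLog t + t * log N ≤ negMulLog a + a * log N := by
  have hlogN : 1 + log a ≤ log N := by
    simpa [log_mul (exp_ne_zero 1) ha.ne'] using log_le_log (by positivity) haN
  have := negMulLog_le_sub_sub_mul_log_s10 ht ha
  simp only [negMulLog] at this ⊢
  nlinarith [mul_le_mul_of_nonneg_left hlogN (sub_nonneg.2 hta)]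

lemma sum_negMulLog_le {ι : Type*} [Fintype ι] {x : ι → ℝ} (hx : ∀ i, 0 ≤ x i) :
    ∑ i, negMulLog (x i) ≤ negMulLog (∑ i, x i) + (∑ i, x i) * log (Fintype.card ι) := by
  rcases isEmpty_or_nonempty ι with _ | _
  · simp
  set c := (Fintype.card ι : ℝ)
  have hc : 0 < c := Nat.cast_pos.2 Fintype.card_pos
  have h := concaveOn_negMulLog.le_map_sum (t := Finset.univ) (w := fun _ => c⁻¹) (p := x)
    (fun _ _ => by positivity) (by simp [c, hc.ne']) (fun i _ => hx i)
  simp only [smul_eq_mul, ← Finset.mul_sum, negMulLog_mul] at h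
  have hinv : negMulLog c⁻¹ = c⁻¹ * log c := by simp [negMulLog, log_inv]
  rw [hinv] at h
  calc ∑ i, negMulLog (x i) = c * (c⁻¹ * ∑ i, negMulLog (x i)) := by field_simp
    _ ≤ c * ((∑ i, x i) * (c⁻¹ * log c) + c⁻¹ * negMulLog (∑ i, x i)) := by gcongr
    _ = negMulLog (∑ i, x i) + (∑ i, x i) * log c := by field_simp; ring

lemma negMulLog_le_sum_negMulLog {ι : Type*} [Fintype ι] {x : ι → ℝ} (hx : ∀ i, 0 ≤ x i)
    {a : ℝ} (ha : 1 ≤ a) (hxa : ∑ i, x i ≤ a) :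
    negMulLog a ≤ ∑ i, negMulLog (x i) := by
  have hterm : ∀ i, -(x i * log a) ≤ negMulLog (x i) := fun i => by
    rcases (hx i).eq_or_lt with h | h
    · simp [← h]
    · rw [negMulLog, neg_mul, neg_le_neg_iff]
      exact mul_le_mul_of_nonneg_left (log_le_log h
        ((Finset.single_le_sum (fun j _ => hx j) (Finset.mem_univ i)).trans hxa)) (hx i)
  calc negMulLog a = -(a * log a) := by rw [negMulLog, neg_mul]
    _ ≤ -((∑ i, x i) * log a) := neg_le_neg (mul_le_mul_of_nonneg_right hxa (log_nonneg ha))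
    _ = ∑ i, -(x i * log a) := by rw [Finset.sum_mul, Finset.sum_neg_distrib]
    _ ≤ ∑ i, negMulLog (x i) := Finset.sum_le_sum fun i _ => hterm i

end Real

namespace Matrix.IsHermitian

variable {ι 𝕜 : Type*} [Fintype ι] [DecidableEq ι] [RCLike 𝕜] {X : Matrix ι ι 𝕜}

lemma trace_cfc_s10 (hX : X.IsHermitian) (f : ℝ → ℝ) :
    (cfc f X).trace = ∑ i, (f (hX.eigenvalues i) : 𝕜) := by
  rw [hX.cfc_eq, IsHermitian.cfc, Unitary.conjStarAlgAut_apply, trace_mul_cycle,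
    Unitary.coe_star_mul_self, one_mul, trace_diagonal]
  rfl

lemma re_trace_eq_sum_eigenvalues_s10 (hX : X.IsHermitian) :
    RCLike.re X.trace = ∑ i, hX.eigenvalues i := by
  simp [hX.trace_eq_sum_eigenvalues]

lemma trace_mul_cfc (hX : X.IsHermitian) (f : ℝ → ℝ) :
    (X * cfc f X).trace = ∑ i, ((hX.eigenvalues i * f (hX.eigenvalues i) : ℝ) : 𝕜) := by
  have hcont (g : ℝ → ℝ) : ContinuousOn g (spectrum ℝ X) := X.finite_real_spectrum.continuousOn g
  nth_rewrite 1 [← cfc_id' ℝ X]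
  rw [← cfc_mul _ _ X (hcont _) (hcont f), hX.trace_cfc_s10]

end Matrix.IsHermitian

namespace Matrix.PosSemidef

variable {n : ℕ} {X : Matrix (Fin n) (Fin n) ℂ}

lemma re_trace_nonneg_s10 (hX : X.PosSemidef) : 0 ≤ X.trace.re :=
  (Complex.nonneg_iff.1 hX.trace_nonneg).1

lemma vnEntropy_le_inv_exp_one_mul (hX : X.PosSemidef) : vnEntropy X ≤ (exp 1)⁻¹ * n := by
  rw [vnEntropy_eq_sum_negMulLog hX.1]
  calc ∑ i, negMulLog (hX.1.eigenvalues i) ≤ ∑ _i : Fin n, (exp 1)⁻¹ :=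
        Finset.sum_le_sum fun i _ => negMulLog_le_inv_exp_one (hX.eigenvalues_nonneg i)
    _ = (exp 1)⁻¹ * n := by simp [mul_comm]

lemma vnEntropy_le_negMulLog_trace_add (hX : X.PosSemidef) :
    vnEntropy X ≤ negMulLog X.trace.re + X.trace.re * log n := by
  simpa [vnEntropy_eq_sum_negMulLog hX.1, ← hX.1.re_trace_eq_sum_eigenvalues_s10] using
    sum_negMulLog_le hX.eigenvalues_nonneg

lemma negMulLog_le_vnEntropy (hX : X.PosSemidef) {A : ℝ} (hA : 1 ≤ A) (htr : X.trace.re ≤ A) :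
    negMulLog A ≤ vnEntropy X := by
  rw [vnEntropy_eq_sum_negMulLog hX.1]
  exact negMulLog_le_sum_negMulLog hX.eigenvalues_nonneg hA
    (hX.1.re_trace_eq_sum_eigenvalues_s10 ▸ htr)

end Matrix.PosSemidef

theorem stmt10_general {n : ℕ} (A : ℝ) (hA : 1 ≤ A)
    (K : Set (Matrix (Fin n) (Fin n) ℂ))
    (hKpsd : ∀ X ∈ K, X.PosSemidef)
    (hKtr : ∀ X ∈ K, (X.trace).re ≤ A) :
    ∀ φ ∈ K, ∀ φ' ∈ K,
      (A ≤ (Real.exp 1)⁻¹ * n → vnEntropy φ - vnEntropy φ' ≤ A * Real.log n)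
      ∧ ((Real.exp 1)⁻¹ * n ≤ A →
          vnEntropy φ - vnEntropy φ' ≤ (Real.exp 1)⁻¹ * n + A * Real.log A) := by
  intro φ hφ φ' hφ'
  have hlower := (hKpsd φ' hφ').negMulLog_le_vnEntropy hA (hKtr φ' hφ')
  rw [negMulLog, neg_mul] at hlower
  refine ⟨fun hsmall => ?_, fun _ => ?_⟩
  · have hAn : exp 1 * A ≤ n := by rwa [le_inv_mul_iff₀ (exp_pos 1)] at hsmall
    have hmono := negMulLog_add_mul_log_le (hKpsd φ hφ).re_trace_nonneg_s10 (hKtr φ hφ)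
      (by linarith) hAn
    have hupper := (hKpsd φ hφ).vnEntropy_le_negMulLog_trace_add
    simp only [negMulLog] at hmono hupper
    linarith
  · linarith [(hKpsd φ hφ).vnEntropy_le_inv_exp_one_mul]

/-- **Diameter bound, bounded-trace case** (Lemma 5, second part): if every matrix in
`K ⊆ PSD(ℂⁿ)` has trace at most `A ≥ 1`, then for all `φ, φ' ∈ K`,
`S(φ) − S(φ') ≤ A·ln n` when `A ≤ e⁻¹·n`, and `S(φ) − S(φ') ≤ e⁻¹·n + A·ln A`
when `A ≥ e⁻¹·n`. -/
theorem stmt10 {n : ℕ} (hn : 1 ≤ n) (A : ℝ) (hA : 1 ≤ A)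
    (K : Set (Matrix (Fin n) (Fin n) ℂ))
    (hKpsd : ∀ X ∈ K, X.PosSemidef)
    (hKtr : ∀ X ∈ K, (X.trace).re ≤ A) :
    ∀ φ ∈ K, ∀ φ' ∈ K,
      (A ≤ (Real.exp 1)⁻¹ * n → vnEntropy φ - vnEntropy φ' ≤ A * Real.log n)
      ∧ ((Real.exp 1)⁻¹ * n ≤ A →
          vnEntropy φ - vnEntropy φ' ≤ (Real.exp 1)⁻¹ * n + A * Real.log A) :=
  stmt10_general A hA K hKpsd hKtr
end

section
/- Let A and H be n×n Hermitian complex matrices and let p be a polynomial with real coefficients. Then the function t ↦ Re Tr(p(A + t·H)) (where p is evaluated at a matrix via the canonical ℝ-algebra map from polynomials to n×n complex matrices) is differentiable at t = 0 with derivative Re Tr(p'(A) · H), where p' denotes the formal derivative of p. -/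
open Matrix Polynomial Finset

/-!
Along the line `t ↦ A + t • H` the derivative of `M ^ k` is `∑ M ^ (k - 1 - i) * H * M ^ i`,
and cyclicity of the trace collapses its trace to `k * Tr (M ^ (k - 1) * H)`. This is the
trace of `(X ^ k)'(M) * H`, so the formula extends to all polynomials by linearity.
-/

theorem Matrix.trace_sum_pow_mul_mul_pow {m R : Type*} [Fintype m] [DecidableEq m]
    [CommSemiring R] (A H : Matrix m m R) (k : ℕ) :
    trace (∑ i ∈ range k, A ^ (k.pred - i) * H * A ^ i) = k * trace (A ^ (k - 1) * H) := by
  have hterm : ∀ i ∈ range k, trace (A ^ (k.pred - i) * H * A ^ i) = trace (A ^ (k - 1) * H) := by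
    intro i hi
    rw [trace_mul_cycle, ← pow_add, Nat.pred_eq_sub_one,
      Nat.add_sub_cancel' (Nat.le_sub_one_of_lt (mem_range.mp hi))]
  rw [trace_sum, sum_congr rfl hterm, sum_const, card_range, nsmul_eq_mul]

section LineDerivative

-- Only needed inside the proofs; any algebra norm induces the same (product) topology.
attribute [local instance] Matrix.linftyOpNormedRing Matrix.linftyOpNormedAlgebra

variable {m 𝕜 : Type*} [Fintype m] [DecidableEq m] [RCLike 𝕜] (A H : Matrix m m 𝕜)

theorem Matrix.hasDerivAt_trace_pow_add_smul (k : ℕ) (t : ℝ) :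
    HasDerivAt (fun s : ℝ => trace ((A + s • H) ^ k))
      (k * trace ((A + t • H) ^ (k - 1) * H)) t := by
  have hline : HasDerivAt (fun s : ℝ => A + s • H) H t :=
    (((hasDerivAt_id' t).smul_const H).const_add A).congr_deriv (one_smul ℝ H)
  have htrace := ((traceLinearMap m ℝ 𝕜).toContinuousLinearMap.hasFDerivAt).comp_hasDerivAt t
    (hline.fun_pow' k)
  rw [← Matrix.trace_sum_pow_mul_mul_pow]
  exact htrace

theorem Matrix.hasDerivAt_trace_aeval_add_smul (p : ℝ[X]) (t : ℝ) :
    HasDerivAt (fun s : ℝ => trace (aeval (A + s • H) p))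
      (trace (aeval (A + t • H) (derivative p) * H)) t := by
  induction p using Polynomial.induction_on' with
  | add p q hp hq =>
    simpa only [map_add, add_mul, trace_add, derivative_add] using hp.fun_add hq
  | monomial k a =>
    have hsmul := (hasDerivAt_trace_pow_add_smul A H k t).fun_const_smul a
    simp only [aeval_monomial, derivative_monomial, ← Algebra.smul_def, smul_mul, trace_smul]
    rwa [mul_smul, Nat.cast_smul_eq_nsmul, nsmul_eq_mul]

end LineDerivative

theorem stmt12_general {n : ℕ} (A H : Matrix (Fin n) (Fin n) ℂ) (p : Polynomial ℝ) :
    HasDerivAt (fun t : ℝ => (((aeval (A + t • H)) p).trace).re)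
      ((((aeval A) (derivative p)) * H).trace.re) 0 := by
  have h := hasDerivAt_trace_aeval_add_smul A H p 0
  rw [zero_smul, add_zero] at h
  exact Complex.reCLM.hasFDerivAt.comp_hasDerivAt 0 h

/-- **Derivative of a polynomial trace functional along a Hermitian direction**
(Proposition 24 of the paper): for Hermitian matrices `A, H` and a real polynomial `p`,
the map `t ↦ Re Tr p(A + t·H)` is differentiable at `t = 0` with derivative
`Re Tr(p'(A)·H)`. -/
theorem stmt12 {n : ℕ} (A H : Matrix (Fin n) (Fin n) ℂ)
    (hA : A.IsHermitian) (hH : H.IsHermitian) (p : Polynomial ℝ) :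
    HasDerivAt (fun t : ℝ => (((aeval (A + t • H)) p).trace).re)
      ((((aeval A) (derivative p)) * H).trace.re) 0 :=
  stmt12_general A H p
end
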